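/- arXiv:1907.03262 — 3 statements merged into one kernel-verified Lean document; each statement's English description precedes it below -/
import Mathlib

section
/- Let α ≥ 1 be an integer, L = 2^α, Δ > 0 and p > 0. For the midrise uniform quantizer h_{L,Δ} and the centered Gaussian density f_p, the Bussgang gain a := (1/p) ∫_{-∞}^{∞} z · h_{L,Δ}(z) · f_p(z) dz satisfies a = (Δ/√(2πp)) · (1 + 2·Σ_{l=1}^{L/2−1} exp(−l²Δ²/(2p))). (This is Lemma 1, formula for a, with the constant matching the derivation in Appendix A; equivalently a = Δ√(2/(πp))·(1/2 + Σ_{l=1}^{L/2−1} exp(−l²Δ²/(2p))).) -/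
/-!
For `L = 2N + 2` the quantizer is `Δ (k + ½)` with `k = ⌊z/Δ⌋` clamped to `[-N-1, N]`, and this
clamp is a staircase: `h_{L,Δ} = Δ (½ s₀ + ∑_{l=1}^{N} s_{lΔ})`, where `s_c` is `1` on `[c, ∞)`,
`-1` on `(-∞, -c)` and `0` in between. Since `z f_p(z) = -p f_p'(z)`, the tails are
`∫_c^∞ z f_p = p f_p(c)` and `∫_{-∞}^{-c} z f_p = -p f_p(c)`, so `∫ z s_c(z) f_p(z) dz = 2 p f_p(c)`;
summing over the steps gives the formula.
-/

open MeasureTheory Real Finset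

/-- The midrise uniform quantizer with `L` levels and step size `Δ`. -/
noncomputable def midrise (L : ℕ) (Δ : ℝ) (z : ℝ) : ℝ :=
  if z < (-(L : ℝ) / 2 + 1) * Δ then -(((L : ℝ) - 1) / 2) * Δ
  else if ((L : ℝ) / 2 - 1) * Δ ≤ z then ((L : ℝ) - 1) / 2 * Δ
  else ((⌊z / Δ⌋ : ℝ) + 1 / 2) * Δ

/-- Density of a centered real Gaussian with variance `p`. -/
noncomputable def gaussPDF (p : ℝ) (z : ℝ) : ℝ :=
  (Real.sqrt (2 * Real.pi * p))⁻¹ * Real.exp (-(z ^ 2) / (2 * p))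

open Filter Topology

def symmStep {α : Type*} [LinearOrder α] [Neg α] (c x : α) : ℝ :=
  if c ≤ x then 1 else if x < -c then -1 else 0

lemma symmStep_intCast_mul_eq_floor {Δ : ℝ} (hΔ : 0 < Δ) (c : ℤ) (z : ℝ) :
    symmStep (c * Δ) z = symmStep c ⌊z / Δ⌋ := by
  simp only [symmStep, Int.le_floor, Int.floor_lt, le_div_iff₀ hΔ, div_lt_iff₀ hΔ,
    Int.cast_neg, neg_mul]

lemma symmStep_mul_eq_indicator_sub {c : ℝ} (hc : 0 ≤ c) (g : ℝ → ℝ) (z : ℝ) :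
    symmStep c z * g z = (Set.Ici c).indicator g z - (Set.Iio (-c)).indicator g z := by
  simp only [symmStep, Set.indicator_apply, Set.mem_Ici, Set.mem_Iio]
  split_ifs <;> first | (exfalso; linarith) | ring

lemma integrable_symmStep_mul {c : ℝ} (hc : 0 ≤ c) {g : ℝ → ℝ} (hg : Integrable g) :
    Integrable fun z => symmStep c z * g z := by
  simp_rw [symmStep_mul_eq_indicator_sub hc]
  exact (hg.indicator measurableSet_Ici).sub (hg.indicator measurableSet_Iio)

lemma integral_symmStep_mul {c : ℝ} (hc : 0 ≤ c) {g : ℝ → ℝ} (hg : Integrable g) :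
    ∫ z, symmStep c z * g z = (∫ z in Set.Ioi c, g z) - ∫ z in Set.Iio (-c), g z := by
  simp_rw [symmStep_mul_eq_indicator_sub hc]
  rw [integral_sub (hg.indicator measurableSet_Ici) (hg.indicator measurableSet_Iio),
    integral_indicator measurableSet_Ici, integral_indicator measurableSet_Iio,
    integral_Ici_eq_integral_Ioi]

lemma clamp_add_half_eq_sum_symmStep (N : ℕ) (k : ℤ) :
    ((max (-(N : ℤ) - 1) (min k N) : ℤ) : ℝ) + 1 / 2
      = 1 / 2 * symmStep 0 k + ∑ l ∈ Icc 1 N, symmStep (l : ℤ) k := by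
  induction N with
  | zero =>
    have hbase : max (-((0 : ℕ) : ℤ) - 1) (min k (0 : ℕ)) = if 0 ≤ k then 0 else -1 := by
      split_ifs <;> omega
    rw [hbase, symmStep, neg_zero]
    split_ifs <;> first | omega | norm_num
  | succ N ih =>
    rw [sum_Icc_succ_top (by omega), ← add_assoc, ← ih]
    have hstep : max (-((N + 1 : ℕ) : ℤ) - 1) (min k (N + 1 : ℕ))
        = max (-(N : ℤ) - 1) (min k N)
          + if ((N + 1 : ℕ) : ℤ) ≤ k then 1 else if k < -((N + 1 : ℕ) : ℤ) then -1 else 0 := by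
      split_ifs <;> omega
    rw [hstep, symmStep]
    push_cast
    split_ifs <;> ring

lemma midrise_eq_clamp (N : ℕ) {Δ : ℝ} (hΔ : 0 < Δ) (z : ℝ) :
    midrise (2 * N + 2) Δ z
      = (((max (-(N : ℤ) - 1) (min ⌊z / Δ⌋ N) : ℤ) : ℝ) + 1 / 2) * Δ := by
  have hlo : (-(2 * N + 2 : ℕ) / 2 + 1 : ℝ) = -N := by push_cast; ring
  have hhi : ((2 * N + 2 : ℕ) / 2 - 1 : ℝ) = N := by push_cast; ring
  have hval : (((2 * N + 2 : ℕ) : ℝ) - 1) / 2 = N + 1 / 2 := by push_cast; ring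
  rw [midrise, hlo, hhi, hval]
  split_ifs with h₁ h₂
  · have : ⌊z / Δ⌋ < -N :=
      Int.floor_lt.2 (by push_cast; rw [div_lt_iff₀ hΔ]; linarith)
    rw [show max (-(N : ℤ) - 1) (min ⌊z / Δ⌋ N) = -N - 1 by omega]
    push_cast; ring
  · have : (N : ℤ) ≤ ⌊z / Δ⌋ :=
      Int.le_floor.2 (by push_cast; rw [le_div_iff₀ hΔ]; linarith)
    rw [show max (-(N : ℤ) - 1) (min ⌊z / Δ⌋ N) = N by omega]
    push_cast; ring
  · have : -(N : ℤ) ≤ ⌊z / Δ⌋ :=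
      Int.le_floor.2 (by push_cast; rw [le_div_iff₀ hΔ]; linarith)
    have : ⌊z / Δ⌋ < N := Int.floor_lt.2 (by push_cast; rw [div_lt_iff₀ hΔ]; linarith)
    rw [show max (-(N : ℤ) - 1) (min ⌊z / Δ⌋ N) = ⌊z / Δ⌋ by omega]

lemma midrise_eq_sum_symmStep (N : ℕ) {Δ : ℝ} (hΔ : 0 < Δ) (z : ℝ) :
    midrise (2 * N + 2) Δ z
      = Δ * (1 / 2 * symmStep 0 z + ∑ l ∈ Icc 1 N, symmStep (l * Δ) z) := by
  rw [midrise_eq_clamp N hΔ, clamp_add_half_eq_sum_symmStep]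
  simp only [← symmStep_intCast_mul_eq_floor hΔ, Int.cast_zero, zero_mul, Int.cast_natCast]
  ring

section Gaussian

variable {p : ℝ}

lemma gaussPDF_neg (z : ℝ) : gaussPDF p (-z) = gaussPDF p z := by
  rw [gaussPDF, gaussPDF, neg_sq]

lemma hasDerivAt_gaussPDF (z : ℝ) :
    HasDerivAt (gaussPDF p) (-(z / p) * gaussPDF p z) z := by
  have h : HasDerivAt (gaussPDF p) _ z :=
    (((hasDerivAt_pow 2 z).fun_neg.div_const (2 * p)).exp).const_mul (√(2 * π * p))⁻¹
  refine h.congr_deriv ?_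
  rw [gaussPDF]
  norm_num
  ring

lemma tendsto_gaussPDF_cocompact (hp : 0 < p) : Tendsto (gaussPDF p) (cocompact ℝ) (𝓝 0) := by
  have hsq : Tendsto (fun z : ℝ => z ^ 2) (cocompact ℝ) atTop := by
    simpa only [Function.comp_def, norm_eq_abs, sq_abs] using
      (tendsto_pow_atTop two_ne_zero).comp (tendsto_norm_cocompact_atTop (E := ℝ))
  have hexp := tendsto_exp_atBot.comp ((tendsto_neg_atTop_atBot.comp hsq).atBot_div_const
    (by positivity : 0 < 2 * p))
  rw [← mul_zero (√(2 * π * p))⁻¹]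
  exact hexp.const_mul _

lemma integrable_mul_gaussPDF (hp : 0 < p) : Integrable fun z => z * gaussPDF p z := by
  convert (integrable_mul_exp_neg_mul_sq (b := (2 * p)⁻¹) (by positivity)).const_mul
    (√(2 * π * p))⁻¹ using 2 with z
  rw [gaussPDF]
  ring_nf

lemma hasDerivAt_neg_mul_gaussPDF (hp : p ≠ 0) (z : ℝ) :
    HasDerivAt (fun x => -(p * gaussPDF p x)) (z * gaussPDF p z) z := by
  refine ((hasDerivAt_gaussPDF z).const_mul p).neg.congr_deriv ?_
  rw [neg_mul, mul_neg, neg_neg, ← mul_assoc, mul_div_cancel₀ z hp]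

lemma integral_Ioi_mul_gaussPDF (hp : 0 < p) (c : ℝ) :
    ∫ z in Set.Ioi c, z * gaussPDF p z = p * gaussPDF p c := by
  have hlim := (((tendsto_gaussPDF_cocompact hp).const_mul p).neg).mono_left atTop_le_cocompact
  rw [mul_zero, neg_zero] at hlim
  rw [integral_Ioi_of_hasDerivAt_of_tendsto' (fun z _ => hasDerivAt_neg_mul_gaussPDF hp.ne' z)
    (integrable_mul_gaussPDF hp).integrableOn hlim]
  ring

lemma integral_Iio_mul_gaussPDF (hp : 0 < p) (c : ℝ) :
    ∫ z in Set.Iio c, z * gaussPDF p z = -(p * gaussPDF p c) := by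
  have hlim := (((tendsto_gaussPDF_cocompact hp).const_mul p).neg).mono_left atBot_le_cocompact
  rw [mul_zero, neg_zero] at hlim
  rw [← integral_Iic_eq_integral_Iio,
    integral_Iic_of_hasDerivAt_of_tendsto' (fun z _ => hasDerivAt_neg_mul_gaussPDF hp.ne' z)
    (integrable_mul_gaussPDF hp).integrableOn hlim]
  ring

lemma integral_symmStep_mul_gaussPDF (hp : 0 < p) {c : ℝ} (hc : 0 ≤ c) :
    ∫ z, symmStep c z * (z * gaussPDF p z) = 2 * p * gaussPDF p c := by
  rw [integral_symmStep_mul hc (integrable_mul_gaussPDF hp), integral_Ioi_mul_gaussPDF hp,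
    integral_Iio_mul_gaussPDF hp, gaussPDF_neg]
  ring

end Gaussian

lemma integral_mul_midrise_mul_gaussPDF (N : ℕ) {Δ p : ℝ} (hΔ : 0 < Δ) (hp : 0 < p) :
    ∫ z, z * midrise (2 * N + 2) Δ z * gaussPDF p z
      = Δ * p * (gaussPDF p 0 + 2 * ∑ l ∈ Icc 1 N, gaussPDF p (l * Δ)) := by
  have hG := integrable_mul_gaussPDF hp
  have hc : ∀ l : ℕ, 0 ≤ (l : ℝ) * Δ := fun l => by positivity
  have hsteps : ∀ z, z * midrise (2 * N + 2) Δ z * gaussPDF p z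
      = Δ * (1 / 2 * (symmStep 0 z * (z * gaussPDF p z))
        + ∑ l ∈ Icc 1 N, symmStep (l * Δ) z * (z * gaussPDF p z)) := fun z => by
    rw [midrise_eq_sum_symmStep N hΔ, ← sum_mul]
    ring
  simp_rw [hsteps]
  rw [integral_const_mul, integral_add ((integrable_symmStep_mul le_rfl hG).const_mul _)
      (integrable_finsetSum _ fun l _ => integrable_symmStep_mul (hc l) hG),
    integral_const_mul, integral_finsetSum _ fun l _ => integrable_symmStep_mul (hc l) hG,
    integral_symmStep_mul_gaussPDF hp le_rfl,
    sum_congr rfl fun l _ => integral_symmStep_mul_gaussPDF hp (hc l), ← mul_sum]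
  ring

/-- Lemma 1 of the paper, formula for the Bussgang gain `a`. -/
theorem bussgang_gain_midrise (α : ℕ) (hα : 1 ≤ α) (Δ p : ℝ) (hΔ : 0 < Δ) (hp : 0 < p) :
    (1 / p) * ∫ z : ℝ, z * midrise (2 ^ α) Δ z * gaussPDF p z
      = Δ / Real.sqrt (2 * Real.pi * p) *
        (1 + 2 * ∑ l ∈ Finset.Icc 1 (2 ^ α / 2 - 1 : ℕ),
            Real.exp (-((l : ℝ) ^ 2 * Δ ^ 2) / (2 * p))) := by
  obtain ⟨β, rfl⟩ : ∃ β, α = β + 1 := ⟨α - 1, by omega⟩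
  have hL : 2 ^ (β + 1) = 2 * (2 ^ β - 1) + 2 := by
    have := Nat.one_le_two_pow (n := β)
    rw [pow_succ]
    omega
  rw [show 2 ^ (β + 1) / 2 - 1 = 2 ^ β - 1 by omega, hL,
    integral_mul_midrise_mul_gaussPDF _ hΔ hp]
  norm_num [gaussPDF, mul_pow, ← mul_sum]
  field_simp
end

section
/- Let α ≥ 1 be an integer, L = 2^α, Δ > 0 and p > 0. For the midrise uniform quantizer h_{L,Δ} and the centered Gaussian density f_p, the normalized output power b := (1/p) ∫_{-∞}^{∞} h_{L,Δ}(z)² · f_p(z) dz satisfies b = (Δ²/p) · (1/4 + 4·Σ_{l=1}^{L/2−1} l · Q(lΔ/√p)), where Q is the Gaussian Q-function. (Lemma 1, formula for b.) -/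
open MeasureTheory Real Finset

/-- The Gaussian Q-function. -/
noncomputable def Qfun (x : ℝ) : ℝ :=
  ∫ t in Set.Ioi x, (Real.sqrt (2 * Real.pi))⁻¹ * Real.exp (-(t ^ 2) / 2)

/-!
On the cell where `|h(z)| = (M + 1/2)Δ` we have `(M + 1/2)² = 1/4 + ∑_{k ≤ M} 2k`, so the
squared output is the staircase
`h(z)² = Δ² (1/4 + ∑_{k=1}^{L/2-1} 2k (1{z ≥ kΔ} + 1{z < -kΔ}))`.
Integrating it against any probability law turns the indicators into tail probabilities, and
for the centered Gaussian of variance `p` both tails at `±kΔ` equal `Q(kΔ/√p)`, by the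
symmetry of the law and by scaling the standard Gaussian.
-/

open scoped NNReal
open ProbabilityTheory

lemma sum_Icc_two_mul_natCast (m : ℕ) : ∑ k ∈ Icc 1 m, 2 * (k : ℝ) = m * (m + 1) := by
  induction m with
  | zero => simp
  | succ m ih =>
    rw [sum_Icc_succ_top (by omega), ih]
    push_cast
    ring

lemma sq_natCast_min_add_half (M n : ℕ) :
    ((min M n : ℕ) + 1 / 2 : ℝ) ^ 2
      = 1 / 4 + ∑ k ∈ Icc 1 n, if k ≤ M then 2 * (k : ℝ) else 0 := by
  have hfilter : (Icc 1 n).filter (· ≤ M) = Icc 1 (min M n) := by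
    ext k
    simp only [mem_filter, mem_Icc]
    omega
  rw [← sum_filter, hfilter, sum_Icc_two_mul_natCast]
  ring

section Midrise

variable {N : ℕ} {Δ : ℝ}

lemma midrise_of_nonneg {z : ℝ} (hN : 1 ≤ N) (hΔ : 0 < Δ) (hz : 0 ≤ z) :
    midrise (2 * N) Δ z = ((min ⌊z / Δ⌋₊ (N - 1) : ℕ) + 1 / 2) * Δ := by
  have hN' : ((N - 1 : ℕ) : ℝ) = N - 1 := by rw [Nat.cast_sub hN, Nat.cast_one]
  rw [midrise, if_neg (by push_cast; nlinarith)]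
  split_ifs with hsat
  · have hge : N - 1 ≤ ⌊z / Δ⌋₊ :=
      Nat.le_floor ((le_div_iff₀ hΔ).2 (by rw [hN']; push_cast at hsat ⊢; linarith))
    rw [min_eq_right hge]
    push_cast [hN']
    ring
  · have hlt : ⌊z / Δ⌋₊ < N - 1 :=
      (Nat.floor_lt (by positivity)).2
        ((div_lt_iff₀ hΔ).2 (by rw [hN']; push_cast at hsat ⊢; linarith))
    rw [min_eq_left hlt.le, natCast_floor_eq_intCast_floor (by positivity)]

lemma midrise_of_neg {z : ℝ} (hN : 1 ≤ N) (hΔ : 0 < Δ) (hz : z < 0) :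
    midrise (2 * N) Δ z = -(((min (⌈-z / Δ⌉₊ - 1) (N - 1) : ℕ) + 1 / 2) * Δ) := by
  have hN' : ((N - 1 : ℕ) : ℝ) = N - 1 := by rw [Nat.cast_sub hN, Nat.cast_one]
  have hpos : 0 < -z / Δ := div_pos (neg_pos.2 hz) hΔ
  have hceil : 1 ≤ ⌈-z / Δ⌉₊ := Nat.one_le_iff_ne_zero.2 (Nat.ceil_pos.2 hpos).ne'
  rw [midrise]
  split_ifs with hsat hsat'
  · have hgt : N - 1 < ⌈-z / Δ⌉₊ :=
      Nat.lt_ceil.2 ((lt_div_iff₀ hΔ).2 (by rw [hN']; push_cast at hsat ⊢; linarith))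
    rw [min_eq_right (by omega)]
    push_cast [hN']
    ring
  · exfalso
    push_cast at hsat'
    nlinarith
  · have hle : ⌈-z / Δ⌉₊ ≤ N - 1 :=
      Nat.ceil_le.2 ((div_le_iff₀ hΔ).2 (by rw [hN']; push_cast at hsat ⊢; linarith))
    rw [min_eq_left (by omega), Nat.cast_sub hceil, natCast_ceil_eq_intCast_ceil hpos.le, neg_div,
      Int.ceil_neg, Int.cast_neg]
    push_cast
    ring

/-- Midrise cells are closed on the left, hence `Ici` on the positive side and `Iio` on the
negative side: with this choice the identity holds at every `z`, not just almost everywhere. -/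
lemma midrise_sq_eq (hN : 1 ≤ N) (hΔ : 0 < Δ) (z : ℝ) :
    midrise (2 * N) Δ z ^ 2 = Δ ^ 2 * (1 / 4 + ∑ k ∈ Icc 1 (N - 1),
      2 * (k : ℝ) * ((Set.Ici (k * Δ)).indicator 1 z + (Set.Iio (-(k * Δ))).indicator 1 z)) := by
  rcases le_or_gt 0 z with hz | hz
  · rw [midrise_of_nonneg hN hΔ hz, mul_pow, sq_natCast_min_add_half, mul_comm]
    congr 2
    refine sum_congr rfl fun k _ ↦ ?_
    have hright : ¬z < -(k * Δ) := by
      have : 0 ≤ (k : ℝ) * Δ := by positivity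
      linarith
    simp only [Set.indicator_apply, Set.mem_Ici, Set.mem_Iio, hright, ← le_div_iff₀ hΔ,
      Nat.le_floor_iff (div_nonneg hz hΔ.le), if_false, add_zero]
    split_ifs <;> simp
  · rw [midrise_of_neg hN hΔ hz, neg_sq, mul_pow, sq_natCast_min_add_half, mul_comm]
    congr 2
    refine sum_congr rfl fun k _ ↦ ?_
    have hleft : ¬(k : ℝ) * Δ ≤ z := by
      have : 0 ≤ (k : ℝ) * Δ := by positivity
      linarith
    have hceil : k ≤ ⌈-z / Δ⌉₊ - 1 ↔ z < -(k * Δ) := by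
      rw [Nat.le_sub_one_iff_lt (Nat.ceil_pos.2 (div_pos (neg_pos.2 hz) hΔ)), Nat.lt_ceil,
        lt_div_iff₀ hΔ]
      constructor <;> intro h <;> linarith
    simp only [Set.indicator_apply, Set.mem_Ici, Set.mem_Iio, hleft, ← hceil, if_false,
      zero_add]
    split_ifs <;> simp

lemma integral_midrise_sq (hN : 1 ≤ N) (hΔ : 0 < Δ) (μ : Measure ℝ)
    [IsProbabilityMeasure μ] :
    ∫ z, midrise (2 * N) Δ z ^ 2 ∂μ = Δ ^ 2 * (1 / 4 + ∑ k ∈ Icc 1 (N - 1),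
      2 * (k : ℝ) * (μ.real (Set.Ici (k * Δ)) + μ.real (Set.Iio (-(k * Δ))))) := by
  have hind {s : Set ℝ} (hs : MeasurableSet s) : Integrable (s.indicator 1) μ :=
    (integrable_const (1 : ℝ)).indicator hs
  have hterm (k : ℕ) : Integrable (fun z ↦ 2 * (k : ℝ) *
      ((Set.Ici (k * Δ)).indicator 1 z + (Set.Iio (-(k * Δ))).indicator 1 z)) μ :=
    ((hind measurableSet_Ici).add (hind measurableSet_Iio)).const_mul _
  simp_rw [midrise_sq_eq hN hΔ]
  rw [integral_const_mul,
    integral_add (integrable_const _) (integrable_finsetSum _ fun k _ ↦ hterm k), integral_const,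
    integral_finsetSum _ fun k _ ↦ hterm k]
  simp_rw [integral_const_mul, integral_add (hind measurableSet_Ici) (hind measurableSet_Iio),
    integral_indicator_one measurableSet_Ici, integral_indicator_one measurableSet_Iio]
  simp

end Midrise

namespace ProbabilityTheory

lemma gaussianReal_real_Ici {m : ℝ} {v : ℝ≥0} (hv : v ≠ 0) (a : ℝ) :
    (gaussianReal m v).real (Set.Ici a) = (gaussianReal m v).real (Set.Ioi a) :=
  haveI := nullSingletonClass_gaussianReal (μ := m) hv
  measureReal_congr Ioi_ae_eq_Ici.symm

lemma gaussianReal_zero_real_Iio_neg (v : ℝ≥0) (a : ℝ) :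
    (gaussianReal 0 v).real (Set.Iio (-a)) = (gaussianReal 0 v).real (Set.Ioi a) := by
  have hsymm : (gaussianReal 0 v).map (fun x ↦ -x) = gaussianReal 0 v := by
    simpa using gaussianReal_map_neg (μ := 0) (v := v)
  conv_lhs => rw [← hsymm, map_measureReal_apply measurable_neg measurableSet_Iio]
  congr 1
  ext x
  simp

lemma gaussianReal_zero_eq_map_sqrt_mul {p : ℝ} (hp : 0 ≤ p) :
    gaussianReal 0 p.toNNReal = (gaussianReal 0 1).map (√p * ·) := by
  rw [gaussianReal_map_const_mul, mul_zero, mul_one]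
  congr
  ext
  simp [Real.sq_sqrt hp, hp]

end ProbabilityTheory

lemma gaussPDF_eq_gaussianPDFReal {p : ℝ} (hp : 0 ≤ p) :
    gaussPDF p = gaussianPDFReal 0 p.toNNReal := by
  funext z
  simp [gaussPDF, gaussianPDFReal, Real.coe_toNNReal _ hp]

lemma integral_mul_gaussPDF {p : ℝ} (hp : 0 < p) (g : ℝ → ℝ) :
    ∫ z, g z * gaussPDF p z = ∫ z, g z ∂gaussianReal 0 p.toNNReal := by
  rw [integral_gaussianReal_eq_integral_smul (by simpa using hp),
    gaussPDF_eq_gaussianPDFReal hp.le]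
  simp_rw [smul_eq_mul, mul_comm]

lemma Qfun_eq_gaussianReal_real_Ioi (x : ℝ) : Qfun x = (gaussianReal 0 1).real (Set.Ioi x) := by
  rw [measureReal_def, gaussianReal_apply_eq_integral _ one_ne_zero, ENNReal.toReal_ofReal
    (setIntegral_nonneg measurableSet_Ioi fun _ _ ↦ gaussianPDFReal_nonneg _ _ _), Qfun]
  simp [gaussianPDFReal]

lemma gaussianReal_real_Ioi_eq_Qfun {p : ℝ} (hp : 0 < p) (a : ℝ) :
    (gaussianReal 0 p.toNNReal).real (Set.Ioi a) = Qfun (a / √p) := by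
  rw [gaussianReal_zero_eq_map_sqrt_mul hp.le,
    map_measureReal_apply (measurable_const_mul _) measurableSet_Ioi,
    Qfun_eq_gaussianReal_real_Ioi]
  congr 1
  ext t
  simp [div_lt_iff₀' (sqrt_pos.2 hp)]

lemma integral_midrise_sq_mul_gaussPDF {N : ℕ} (hN : 1 ≤ N) {Δ p : ℝ} (hΔ : 0 < Δ)
    (hp : 0 < p) :
    ∫ z, midrise (2 * N) Δ z ^ 2 * gaussPDF p z
      = Δ ^ 2 * (1 / 4 + 4 * ∑ k ∈ Icc 1 (N - 1), (k : ℝ) * Qfun (k * Δ / √p)) := by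
  rw [integral_mul_gaussPDF hp, integral_midrise_sq hN hΔ, mul_sum]
  congr 2
  refine sum_congr rfl fun k _ ↦ ?_
  rw [gaussianReal_real_Ici (by simpa using hp), gaussianReal_zero_real_Iio_neg,
    gaussianReal_real_Ioi_eq_Qfun hp]
  ring

/-- Lemma 1 of the paper, formula for the normalized quantizer output power `b`. -/
theorem bussgang_output_power_midrise (α : ℕ) (hα : 1 ≤ α) (Δ p : ℝ) (hΔ : 0 < Δ)
    (hp : 0 < p) :
    (1 / p) * ∫ z : ℝ, (midrise (2 ^ α) Δ z) ^ 2 * gaussPDF p z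
      = Δ ^ 2 / p *
        (1 / 4 + 4 * ∑ l ∈ Finset.Icc 1 (2 ^ α / 2 - 1 : ℕ),
            (l : ℝ) * Qfun ((l : ℝ) * Δ / Real.sqrt p)) := by
  obtain ⟨N, hN, hL⟩ : ∃ N, 1 ≤ N ∧ 2 ^ α = 2 * N :=
    ⟨2 ^ (α - 1), Nat.one_le_two_pow, by rw [← pow_succ']; congr; omega⟩
  rw [hL, Nat.mul_div_cancel_left N two_pos, integral_midrise_sq_mul_gaussPDF hN hΔ hp]
  ring
end

section
/- Convexity of the downlink feasibility region (SOCP reformulation of Problem P9): fix K ≥ 1, M ≥ 1, t > 0 and c > 0; for each k let a_k ∈ ℝ^M, for each pair k' ≠ k let d_{k'k} ∈ ℝ^M, and for each pair (k',k) let F_{k'k} be a real symmetric positive-semidefinite M×M matrix. Then the set { W = (w_1,…,w_K) ∈ (ℝ^M)^K : for every k, a_k·w_k ≥ 0 and (a_k·w_k)² ≥ t · ( Σ_{k'≠k} (d_{k'k}·w_{k'})² + Σ_{k'=1}^K w_{k'}ᵀ F_{k'k} w_{k'} + c ) } is a convex subset of (ℝ^M)^K. -/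
/-!
Since `√x ≤ y ↔ 0 ≤ y ∧ x ≤ y ^ 2`, the `k`-th constraint reads `√(t (Q_k(W) + c)) ≤ a_k ⬝ w_k`,
where `Q_k` is a sum of squares of linear functionals and of positive semidefinite quadratic forms. The square root of a
positive semidefinite quadratic form is a seminorm by Cauchy–Schwarz, and `√(f + g)` is convex
whenever `√f` and `√g` are, because the Euclidean norm on `ℝ²` is convex and monotone on the
nonnegative quadrant. So the left-hand side is convex, the right-hand side is linear, and the region
is an intersection of second-order cones.
-/

open Matrix Finset Set

theorem convexOn_sqrt_sq_add_sq : ConvexOn ℝ univ fun p : ℝ × ℝ => √(p.1 ^ 2 + p.2 ^ 2) := by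
  simpa [Function.comp_def, WithLp.prod_norm_eq_of_L2] using
    (convexOn_norm (E := WithLp 2 (ℝ × ℝ)) convex_univ).comp_linearMap
      (WithLp.linearEquiv 2 ℝ (ℝ × ℝ)).symm.toLinearMap

section

variable {E : Type*} [AddCommGroup E] [Module ℝ E] {s : Set E}

theorem ConvexOn.sqrt_add {f g : E → ℝ} (hf₀ : ∀ x ∈ s, 0 ≤ f x) (hg₀ : ∀ x ∈ s, 0 ≤ g x)
    (hf : ConvexOn ℝ s fun x => √(f x)) (hg : ConvexOn ℝ s fun x => √(g x)) :
    ConvexOn ℝ s fun x => √(f x + g x) := by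
  refine ⟨hf.1, fun x hx y hy a b ha hb hab => ?_⟩
  have hsq : ∀ u ∈ s, √(f u + g u) = √(√(f u) ^ 2 + √(g u) ^ 2) := fun u hu => by
    rw [Real.sq_sqrt (hf₀ u hu), Real.sq_sqrt (hg₀ u hu)]
  dsimp only
  rw [hsq _ (hf.1 hx hy ha hb hab), hsq x hx, hsq y hy, smul_eq_mul, smul_eq_mul]
  calc √(√(f (a • x + b • y)) ^ 2 + √(g (a • x + b • y)) ^ 2)
      ≤ √((a * √(f x) + b * √(f y)) ^ 2 + (a * √(g x) + b * √(g y)) ^ 2) := by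
        gcongr
        · exact hf.2 hx hy ha hb hab
        · exact hg.2 hx hy ha hb hab
    _ ≤ a * √(√(f x) ^ 2 + √(g x) ^ 2) + b * √(√(f y) ^ 2 + √(g y) ^ 2) :=
        convexOn_sqrt_sq_add_sq.2 (mem_univ (√(f x), √(g x))) (mem_univ (√(f y), √(g y)))
          ha hb hab

theorem ConvexOn.sqrt_sum {ι : Type*} (hs : Convex ℝ s) (t : Finset ι) {f : ι → E → ℝ}
    (hf₀ : ∀ i ∈ t, ∀ x ∈ s, 0 ≤ f i x) (hf : ∀ i ∈ t, ConvexOn ℝ s fun x => √(f i x)) :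
    ConvexOn ℝ s fun x => √(∑ i ∈ t, f i x) := by
  classical
  induction t using Finset.induction_on with
  | empty => simpa using convexOn_const 0 hs
  | insert i t hi ih =>
    simp only [Finset.sum_insert hi]
    exact (hf i (mem_insert_self i t)).sqrt_add (hf₀ i (mem_insert_self i t))
      (fun x hx => sum_nonneg fun j hj => hf₀ j (mem_insert_of_mem hj) x hx)
      (ih (fun j hj => hf₀ j (mem_insert_of_mem hj)) fun j hj => hf j (mem_insert_of_mem hj))

theorem ConvexOn.sqrt_const_mul {f : E → ℝ} (hf : ConvexOn ℝ s fun x => √(f x)) {t : ℝ}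
    (ht : 0 ≤ t) : ConvexOn ℝ s fun x => √(t * f x) := by
  simp_rw [Real.sqrt_mul ht]
  exact hf.smul (Real.sqrt_nonneg t)

theorem ConvexOn.comp_eval {ι : Type*} {f : E → ℝ} (hf : ConvexOn ℝ univ f) (i : ι) :
    ConvexOn ℝ univ fun x : ι → E => f (x i) :=
  hf.comp_linearMap (LinearMap.proj (R := ℝ) (φ := fun _ : ι => E) i)

theorem ConvexOn.convex_setOf_le_sq {f g : E → ℝ} (hf : ConvexOn ℝ s fun x => √(f x))
    (hg : ConcaveOn ℝ s g) : Convex ℝ {x ∈ s | 0 ≤ g x ∧ f x ≤ g x ^ 2} := by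
  simpa only [Pi.sub_apply, sub_nonpos, Real.sqrt_le_iff] using (hf.sub hg).convex_le 0

namespace LinearMap.BilinForm

variable {B : LinearMap.BilinForm ℝ E}

theorem IsPosSemidef.apply_le_sqrt_mul_sqrt (hB : B.IsPosSemidef) (x y : E) :
    B x y ≤ √(B x x) * √(B y y) := by
  rw [← Real.sqrt_mul (hB.nonneg x)]
  exact Real.le_sqrt_of_sq_le
    (B.apply_sq_le_of_symm hB.nonneg (isSymm_iff.1 hB.isSymm) x y)

theorem IsPosSemidef.convexOn_sqrt_apply_self (hB : B.IsPosSemidef) :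
    ConvexOn ℝ univ fun x => √(B x x) := by
  refine ⟨convex_univ, fun x _ y _ a b ha hb _ => ?_⟩
  have hexp : B (a • x + b • y) (a • x + b • y) =
      a ^ 2 * B x x + 2 * (a * b) * B x y + b ^ 2 * B y y := by
    have hyx : B y x = B x y := hB.isSymm.eq y x
    simp only [map_add, map_smul, LinearMap.add_apply, LinearMap.smul_apply, smul_eq_mul, hyx]
    ring
  rw [smul_eq_mul, smul_eq_mul, Real.sqrt_le_left (by positivity), hexp]
  have hxy := mul_le_mul_of_nonneg_left (hB.apply_le_sqrt_mul_sqrt x y)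
    (by positivity : 0 ≤ 2 * (a * b))
  nlinarith [Real.sq_sqrt (hB.nonneg x), Real.sq_sqrt (hB.nonneg y)]

end LinearMap.BilinForm

end

section

variable {n : Type*} [Fintype n]

theorem convexOn_sqrt_sq_dotProduct (v : n → ℝ) : ConvexOn ℝ univ fun x => √((v ⬝ᵥ x) ^ 2) := by
  simpa [Function.comp_def, Real.sqrt_sq_eq_abs] using
    (convexOn_norm convex_univ).comp_linearMap (dotProductBilin ℝ ℝ v)

namespace Matrix.PosSemidef

variable {A : Matrix n n ℝ}

theorem dotProduct_mulVec_self_nonneg (hA : A.PosSemidef) (x : n → ℝ) : 0 ≤ x ⬝ᵥ A *ᵥ x := by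
  simpa using hA.dotProduct_mulVec_nonneg x

theorem isPosSemidef_toBilin' [DecidableEq n] (hA : A.PosSemidef) :
    (toBilin' A).IsPosSemidef where
  isSymm := isSymm_toBilin'_iff_isSymm.2 (isHermitian_iff_isSymm.1 hA.1)
  isNonneg := ⟨by simpa [toBilin'_apply'] using hA.dotProduct_mulVec_self_nonneg⟩

theorem convexOn_sqrt_dotProduct_mulVec [DecidableEq n] (hA : A.PosSemidef) :
    ConvexOn ℝ univ fun x => √(x ⬝ᵥ A *ᵥ x) := by
  simpa [toBilin'_apply'] using hA.isPosSemidef_toBilin'.convexOn_sqrt_apply_self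

end Matrix.PosSemidef

end

theorem downlink_feasibility_convex_general
    {K M : ℕ} (t c : ℝ) (ht : 0 < t) (hc : 0 < c)
    (a : Fin K → Fin M → ℝ) (d : Fin K → Fin K → Fin M → ℝ)
    (F : Fin K → Fin K → Matrix (Fin M) (Fin M) ℝ)
    (hF : ∀ k' k, (F k' k).PosSemidef) :
    Convex ℝ {W : Fin K → Fin M → ℝ | ∀ k : Fin K,
      0 ≤ a k ⬝ᵥ W k ∧
      t * ((∑ k' ∈ Finset.univ.erase k, (d k' k ⬝ᵥ W k') ^ 2) +
            (∑ k', W k' ⬝ᵥ (F k' k).mulVec (W k')) + c)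
        ≤ (a k ⬝ᵥ W k) ^ 2} := by
  have hpilot₀ (k : Fin K) (W : Fin K → Fin M → ℝ) :
      0 ≤ ∑ k' ∈ univ.erase k, (d k' k ⬝ᵥ W k') ^ 2 :=
    sum_nonneg fun _ _ => sq_nonneg _
  have hinterf₀ (k : Fin K) (W : Fin K → Fin M → ℝ) : 0 ≤ ∑ k', W k' ⬝ᵥ F k' k *ᵥ W k' :=
    sum_nonneg fun k' _ => (hF k' k).dotProduct_mulVec_self_nonneg (W k')
  have hpilot (k : Fin K) : ConvexOn ℝ univ fun W : Fin K → Fin M → ℝ =>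
      √(∑ k' ∈ univ.erase k, (d k' k ⬝ᵥ W k') ^ 2) :=
    ConvexOn.sqrt_sum convex_univ _ (fun _ _ _ _ => sq_nonneg _) fun k' _ =>
      (convexOn_sqrt_sq_dotProduct (d k' k)).comp_eval k'
  have hinterf (k : Fin K) : ConvexOn ℝ univ fun W : Fin K → Fin M → ℝ =>
      √(∑ k', W k' ⬝ᵥ F k' k *ᵥ W k') :=
    ConvexOn.sqrt_sum convex_univ _ (fun k' _ W _ => (hF k' k).dotProduct_mulVec_self_nonneg (W k'))
      fun k' _ => (hF k' k).convexOn_sqrt_dotProduct_mulVec.comp_eval k'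
  rw [ofPred_forall]
  refine convex_iInter fun k => ?_
  have hdenom := ((hpilot k).sqrt_add (fun W _ => hpilot₀ k W) (fun W _ => hinterf₀ k W)
    (hinterf k)).sqrt_add (fun W _ => add_nonneg (hpilot₀ k W) (hinterf₀ k W)) (fun _ _ => hc.le)
      (convexOn_const _ convex_univ)
  have hsignal : ConcaveOn ℝ univ fun W : Fin K → Fin M → ℝ => a k ⬝ᵥ W k :=
    (dotProductBilin ℝ ℝ (a k) ∘ₗ LinearMap.proj (R := ℝ) (φ := fun _ => Fin M → ℝ) k).concaveOn
      convex_univ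
  simpa only [sep_univ] using (hdenom.sqrt_const_mul ht.le).convex_setOf_le_sq hsignal

/-- Convexity of the downlink feasibility region at target SINR `t` (the SOCP
reformulation of Problem P9 of the paper): the set of precoding matrices
`W = (w_1, …, w_K)` satisfying all downlink SINR constraints is convex. -/
theorem downlink_feasibility_convex
    {K M : ℕ} (hK : 1 ≤ K) (hM : 1 ≤ M) (t c : ℝ) (ht : 0 < t) (hc : 0 < c)
    (a : Fin K → Fin M → ℝ) (d : Fin K → Fin K → Fin M → ℝ)
    (F : Fin K → Fin K → Matrix (Fin M) (Fin M) ℝ)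
    (hF : ∀ k' k, (F k' k).PosSemidef) :
    Convex ℝ {W : Fin K → Fin M → ℝ | ∀ k : Fin K,
      0 ≤ a k ⬝ᵥ W k ∧
      t * ((∑ k' ∈ Finset.univ.erase k, (d k' k ⬝ᵥ W k') ^ 2) +
            (∑ k', W k' ⬝ᵥ (F k' k).mulVec (W k')) + c)
        ≤ (a k ⬝ᵥ W k) ^ 2} :=
  downlink_feasibility_convex_general t c ht hc a d F hF
end
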